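/- arXiv:2502.11057 — 2 statements merged into one kernel-verified Lean document; each statement's English description precedes it below -/
import Mathlib

section
/- Let X_1, ..., X_n, X_{test} be i.i.d. real-valued random variables (exchangeable suffices), and let \alpha \in (0,1). Let \hat{q} be the \lceil (n+1)(1-\alpha) \rceil-th smallest value among X_1, ..., X_n (assuming \lceil (n+1)(1-\alpha) \rceil \le n). Then P(X_{test} \le \hat{q}) \ge 1 - \alpha. -/
/-!
Write `strictRank y k` for the number of coordinates of `y` strictly below `y k`. The test score
is covered exactly when its strict rank among all `n + 1` scores is `< l`. For every tuple, at
least `l` coordinates have strict rank `< l`: a coordinate of minimal value among those of rank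
`≥ l` has all strictly smaller coordinates of rank `< l`, so its rank would be `< l` as well.
Exchangeability makes the `n + 1` events `strictRank X k < l` equiprobable, so each has
probability at least `l / (n + 1) ≥ 1 - α`.
-/

open MeasureTheory ProbabilityTheory Finset
open scoped ENNReal

theorem ENNReal.ofReal_le_of_ceil_mul_le {m : ℕ} (hm : m ≠ 0) {a : ℝ} {p : ℝ≥0∞}
    (h : (⌈m * a⌉₊ : ℝ≥0∞) ≤ m * p) : ENNReal.ofReal a ≤ p := by
  refine (ENNReal.mul_le_mul_iff_right (by exact_mod_cast hm) (ENNReal.natCast_ne_top m)).1 ?_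
  calc (m : ℝ≥0∞) * ENNReal.ofReal a = ENNReal.ofReal (m * a) := by
        rw [ENNReal.ofReal_mul (Nat.cast_nonneg m), ENNReal.ofReal_natCast]
    _ ≤ ENNReal.ofReal ⌈m * a⌉₊ := ENNReal.ofReal_le_ofReal (Nat.le_ceil _)
    _ ≤ m * p := by rwa [ENNReal.ofReal_natCast]

theorem List.countP_ofFn {α : Type*} {m : ℕ} (p : α → Prop) [DecidablePred p] (f : Fin m → α) :
    (List.ofFn f).countP (fun a => decide (p a)) = #{i | p (f i)} := by
  rw [← Multiset.coe_countP, ← Fin.univ_val_map, Multiset.countP_map]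
  rfl

theorem List.Pairwise.le_getElem_iff_countP_le {α : Type*} [LinearOrder α] {s : List α}
    (hs : s.Pairwise (· ≤ ·)) {l : ℕ} (hl : l < s.length) (x : α) :
    x ≤ s[l] ↔ s.countP (· < x) ≤ l := by
  have hle : ∀ {i j} (hi : i < s.length) (hj : j < s.length), i ≤ j → s[i] ≤ s[j] :=
    fun hi hj hij => hij.eq_or_lt.elim (fun h => by subst h; rfl)
      (List.pairwise_iff_getElem.1 hs _ _ hi hj)
  constructor
  · intro hx
    have htail : (s.drop l).countP (· < x) = 0 := by
      refine List.countP_eq_zero.2 fun a ha => ?_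
      obtain ⟨j, hj, rfl⟩ := List.mem_iff_getElem.1 ha
      rw [List.getElem_drop]
      simpa using hx.trans (hle _ _ (Nat.le_add_right l j))
    calc s.countP (· < x) = (s.take l).countP (· < x) + (s.drop l).countP (· < x) := by
          rw [← List.countP_append, List.take_append_drop]
      _ ≤ l := by
          rw [htail, add_zero]
          exact List.countP_le_length.trans (List.length_take_le _ _)
  · intro hcount
    by_contra! hx
    have hhead : (s.take (l + 1)).countP (· < x) = l + 1 := by
      rw [List.countP_eq_length.2, List.length_take_of_le hl]
      intro a ha
      obtain ⟨j, hj, rfl⟩ := List.mem_iff_getElem.1 ha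
      rw [List.getElem_take]
      simp only [List.length_take_of_le hl] at hj
      simpa using (hle _ hl (Nat.le_of_lt_succ hj)).trans_lt hx
    have := (List.take_sublist (l + 1) s).countP_le (p := (· < x))
    omega

theorem measurePreserving_comp_perm_pi {ι α : Type*} [Fintype ι] [MeasurableSpace α]
    (ν : Measure α) [SigmaFinite ν] (e : Equiv.Perm ι) :
    MeasurePreserving (fun y : ι → α => y ∘ e) (Measure.pi fun _ => ν) (Measure.pi fun _ => ν) := by
  convert measurePreserving_piCongrLeft (fun _ : ι => ν) e.symm using 1
  ext y i
  simp [MeasurableEquiv.piCongrLeft, Equiv.piCongrLeft_apply]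

open Classical in
theorem le_sum_measure_of_le_card_mem {β ι : Type*} [MeasurableSpace β] [Fintype ι]
    (P : Measure β) {B : ι → Set β} (hB : ∀ k, MeasurableSet (B k)) {l : ℕ}
    (hl : ∀ y, l ≤ #{k | y ∈ B k}) :
    l * P Set.univ ≤ ∑ k, P (B k) := by
  have hcard : ∀ y, ∑ k, (B k).indicator 1 y = (#{k | y ∈ B k} : ℝ≥0∞) := by
    intro y
    simp [Set.indicator_apply]
  calc l * P Set.univ = ∫⁻ _, (l : ℝ≥0∞) ∂P := by rw [lintegral_const]
    _ ≤ ∫⁻ y, ∑ k, (B k).indicator 1 y ∂P :=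
        lintegral_mono fun y => (hcard y).symm ▸ Nat.cast_le.2 (hl y)
    _ = ∑ k, P (B k) := by
        rw [lintegral_finsetSum _ fun k _ => measurable_one.indicator (hB k)]
        simp only [lintegral_indicator_one (hB _)]

section StrictRank

variable {ι α : Type*} [Fintype ι] [LinearOrder α]

def strictRank (y : ι → α) (k : ι) : ℕ := #{i | y i < y k}

theorem strictRank_comp_equiv {ι' : Type*} [Fintype ι'] (y : ι → α) (e : ι' ≃ ι) (k : ι') :
    strictRank (y ∘ e) k = strictRank y (e k) :=
  card_equiv e (by simp)

theorem le_card_filter_strictRank_lt (y : ι → α) {l : ℕ} (hl : l ≤ Fintype.card ι) :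
    l ≤ #{k | strictRank y k < l} := by
  by_contra! hfew
  obtain ⟨k₀, -, hk₀⟩ := exists_mem_notMem_of_card_lt_card (t := univ)
    (s := {k | strictRank y k < l}) (by simpa using hfew.trans_le hl)
  have hhigh : ({k | ¬ strictRank y k < l} : Finset ι).Nonempty :=
    ⟨k₀, by simpa using hk₀⟩
  obtain ⟨k, hk, hmin⟩ := exists_min_image _ y hhigh
  have hbelow : ({i | y i < y k} : Finset ι) ⊆ ({k | strictRank y k < l} : Finset ι) := by
    intro i hi
    simp only [mem_filter, mem_univ, true_and] at hi hmin ⊢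
    by_contra hil
    exact (hmin i hil).not_gt hi
  have := (card_le_card hbelow).trans_lt hfew
  simp only [mem_filter, mem_univ, true_and] at hk
  exact hk this

theorem le_getD_insertionSort_iff_strictRank_le {n l : ℕ} (y : Fin (n + 1) → α) (d : α)
    (hl : l < n) :
    y (Fin.last n) ≤ ((List.ofFn fun i : Fin n => y i.castSucc).insertionSort (· ≤ ·)).getD l d ↔
      strictRank y (Fin.last n) ≤ l := by
  set s := (List.ofFn fun i : Fin n => y i.castSucc).insertionSort (· ≤ ·)
  have hperm : s.Perm (List.ofFn fun i : Fin n => y i.castSucc) := List.perm_insertionSort _ _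
  have hlen : l < s.length := by simpa [hperm.length_eq] using hl
  have hcount : s.countP (· < y (Fin.last n)) = strictRank y (Fin.last n) := by
    rw [hperm.countP_eq, List.countP_ofFn, strictRank, card_filter, card_filter,
      Fin.sum_univ_castSucc]
    simp
  rw [List.getD_eq_getElem _ _ hlen, (List.pairwise_insertionSort _ _).le_getElem_iff_countP_le,
    hcount]

variable [TopologicalSpace α] [OrderClosedTopology α] [SecondCountableTopology α]
  [MeasurableSpace α] [OpensMeasurableSpace α]

theorem measurableSet_strictRank_lt (k : ι) (l : ℕ) :
    MeasurableSet {y : ι → α | strictRank y k < l} := by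
  have : Measurable fun y : ι → α => strictRank y k := by
    simp only [strictRank, card_filter]
    exact Finset.measurable_sum _ fun i _ => Measurable.ite
      (measurableSet_lt (measurable_pi_apply i) (measurable_pi_apply k))
      measurable_const measurable_const
  exact this measurableSet_Iio

theorem le_card_mul_measure_strictRank_lt (P : Measure (ι → α)) [IsProbabilityMeasure P]
    (hP : ∀ e : Equiv.Perm ι, MeasurePreserving (fun y => y ∘ e) P P)
    {l : ℕ} (hl : l ≤ Fintype.card ι) (k : ι) :
    l ≤ Fintype.card ι * P {y | strictRank y k < l} := by
  classical
  have hequiprobable : ∀ j, P {y | strictRank y j < l} = P {y | strictRank y k < l} := by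
    intro j
    rw [← (hP (Equiv.swap j k)).measure_preimage
      (measurableSet_strictRank_lt k l).nullMeasurableSet]
    simp [Set.preimage, strictRank_comp_equiv]
  have := le_sum_measure_of_le_card_mem P (fun j => measurableSet_strictRank_lt j l)
    fun y => by simpa using le_card_filter_strictRank_lt y hl
  simpa [hequiprobable] using this

end StrictRank

/-- Split conformal prediction marginal coverage: with i.i.d. scores
`X 0, …, X (n-1)` (calibration) and `X n` (test), letting `q̂` be the
`⌈(n+1)(1-α)⌉`-th smallest calibration score, the test score is covered
with probability at least `1 - α`. -/
theorem conformal_prediction_coverage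
    {Ω : Type*} [MeasurableSpace Ω] (μ : Measure Ω) [IsProbabilityMeasure μ]
    (n : ℕ) (X : Fin (n + 1) → Ω → ℝ)
    (hmeas : ∀ i, Measurable (X i))
    (hindep : iIndepFun X μ)
    (hid : ∀ i j, IdentDistrib (X i) (X j) μ μ)
    (α : ℝ) (hα : α ∈ Set.Ioo (0:ℝ) 1)
    (l : ℕ) (hl : l = ⌈((n:ℝ) + 1) * (1 - α)⌉₊) (hln : l ≤ n)
    (qhat : Ω → ℝ)
    (hq : ∀ ω, qhat ω =
      (((List.ofFn fun i : Fin n => X i.castSucc ω).insertionSort (· ≤ ·)).getD (l - 1) 0)) :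
    ENNReal.ofReal (1 - α) ≤ μ {ω | X (Fin.last n) ω ≤ qhat ω} := by
  have hl_pos : 0 < l := hl ▸ Nat.ceil_pos.2 (mul_pos (by positivity) (sub_pos.2 hα.2))
  set V : Ω → Fin (n + 1) → ℝ := fun ω i => X i ω
  have hV : Measurable V := measurable_pi_lambda _ hmeas
  have hlaw : μ.map V = Measure.pi fun _ => μ.map (X 0) := by
    rw [(iIndepFun_iff_map_fun_eq_pi_map fun i => (hmeas i).aemeasurable).1 hindep]
    simp_rw [(hid _ 0).map_eq]
  have hcover : {ω | X (Fin.last n) ω ≤ qhat ω} = V ⁻¹' {y | strictRank y (Fin.last n) < l} := by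
    ext ω
    rw [Set.mem_preimage, Set.mem_ofPred_eq, Set.mem_ofPred_eq, hq,
      ← Nat.le_sub_one_iff_lt hl_pos]
    exact le_getD_insertionSort_iff_strictRank_le (V ω) 0 (by omega)
  have := Measure.isProbabilityMeasure_map (μ := μ) hV.aemeasurable
  have hrank := le_card_mul_measure_strictRank_lt (μ.map V)
    (hlaw ▸ measurePreserving_comp_perm_pi _) (by simpa using hln.trans n.le_succ) (Fin.last n)
  rw [Measure.map_apply hV (measurableSet_strictRank_lt _ _), ← hcover] at hrank
  refine ENNReal.ofReal_le_of_ceil_mul_le (m := n + 1) n.succ_ne_zero ?_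
  simpa [hl] using hrank
end

section
/- Let C, G: \mathcal{X} \to \mathbb{R} on a nonempty set \mathcal{X}, and define \hat{V}(z) = \inf_{u} \max(C(u) - z, G(u)). Define V = \inf\{ z \ge 0 : \hat{V}(z) \le 0 \} and V' = \inf\{ C(u) : u \in \mathcal{X},\ G(u) \le 0 \}. If C is nonnegative and the relevant infima are attained, then V = V'. -/
/-! A feasible control `u` gives `V̂(C u) ≤ max (0, G u) ≤ 0`, so every feasible cost is an
admissible level `z`. Conversely, for an admissible level `z`, a control `u` attaining `V̂(z) ≤ 0`
is feasible with `C u ≤ z`. So both sets have the same lower bounds, hence the same minimum. -/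

theorem IsLeast.eq_of_subset_of_forall_exists_le {α : Type*} [PartialOrder α] {s t : Set α}
    {a b : α} (ha : IsLeast s a) (hb : IsLeast t b) (hts : t ⊆ s)
    (hst : ∀ x ∈ s, ∃ y ∈ t, y ≤ x) : a = b := by
  obtain ⟨y, hyt, hya⟩ := hst a ha.1
  exact le_antisymm (ha.2 (hts hb.1)) ((hb.2 hyt).trans hya)

section Epigraph

variable {X : Type*} {C G : X → ℝ} {Vhat : ℝ → ℝ}

theorem image_feasible_subset_epigraph_levels (hC : ∀ u, 0 ≤ C u)
    (hVhat_le : ∀ z u, Vhat z ≤ max (C u - z) (G u)) :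
    C '' {u | G u ≤ 0} ⊆ {z : ℝ | 0 ≤ z ∧ Vhat z ≤ 0} := by
  rintro _ ⟨u, hGu, rfl⟩
  refine ⟨hC u, (hVhat_le (C u) u).trans (max_le ?_ hGu)⟩
  rw [sub_self]

theorem exists_feasible_le_of_epigraph_level
    (hVhat_attained : ∀ z, ∃ u, Vhat z = max (C u - z) (G u))
    {z : ℝ} (hz : z ∈ {z : ℝ | 0 ≤ z ∧ Vhat z ≤ 0}) :
    ∃ c ∈ C '' {u | G u ≤ 0}, c ≤ z := by
  obtain ⟨u, hu⟩ := hVhat_attained z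
  have hmax : max (C u - z) (G u) ≤ 0 := hu ▸ hz.2
  exact ⟨C u, ⟨u, (max_le_iff.1 hmax).2, rfl⟩, sub_nonpos.1 (max_le_iff.1 hmax).1⟩

end Epigraph

theorem epigraph_value_eq_constrained_value_general
    {X : Type*} (C G : X → ℝ) (Vhat : ℝ → ℝ)
    (hC : ∀ u, 0 ≤ C u)
    (hVhat : ∀ z, (∃ u, Vhat z = max (C u - z) (G u)) ∧
      ∀ u, Vhat z ≤ max (C u - z) (G u))
    (hattain : ∃ zs, IsLeast {z : ℝ | 0 ≤ z ∧ Vhat z ≤ 0} zs)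
    (hattain' : ∃ u, G u ≤ 0 ∧ IsLeast (C '' {u | G u ≤ 0}) (C u)) :
    sInf {z : ℝ | 0 ≤ z ∧ Vhat z ≤ 0} = sInf (C '' {u | G u ≤ 0}) := by
  obtain ⟨zs, hzs⟩ := hattain
  obtain ⟨u₀, -, hu₀⟩ := hattain'
  rw [hzs.csInf_eq, hu₀.csInf_eq]
  exact hzs.eq_of_subset_of_forall_exists_le hu₀
    (image_feasible_subset_epigraph_levels hC fun z => (hVhat z).2)
    fun z => exists_feasible_le_of_epigraph_level fun z => (hVhat z).1

/-- Equivalence of the epigraph formulation with the original state-constrained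
problem: with `V̂(z) = inf_u max(C(u) - z, G(u))` (infima attained), `C ≥ 0`,
`V = inf {z ≥ 0 : V̂(z) ≤ 0}` and `V' = inf {C(u) : G(u) ≤ 0}`, one has `V = V'`. -/
theorem epigraph_value_eq_constrained_value
    {X : Type*} [Nonempty X] (C G : X → ℝ) (Vhat : ℝ → ℝ)
    (hC : ∀ u, 0 ≤ C u)
    (hVhat : ∀ z, (∃ u, Vhat z = max (C u - z) (G u)) ∧
      ∀ u, Vhat z ≤ max (C u - z) (G u))
    (hfeas : ∃ u, G u ≤ 0)
    (hattain : ∃ zs, IsLeast {z : ℝ | 0 ≤ z ∧ Vhat z ≤ 0} zs)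
    (hattain' : ∃ u, G u ≤ 0 ∧ IsLeast (C '' {u | G u ≤ 0}) (C u)) :
    sInf {z : ℝ | 0 ≤ z ∧ Vhat z ≤ 0} = sInf (C '' {u | G u ≤ 0}) :=
  epigraph_value_eq_constrained_value_general C G Vhat hC hVhat hattain hattain'
end
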